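/- Suppose f : (−1,1) → ℝ has the form f(x) = Σ_{l=0}^{k−1} c_l (x−α)^l + ∫_{[−1,1]} (x−α)^k/((1−λx)(1−λα)^k) dμ(λ) for some α ∈ (−1,1), real constants c_l, and a finite positive measure μ on [−1,1]. Then for all pairwise distinct x_1,…,x_{k+1} ∈ (−1,1), f^[k](x_1,…,x_{k+1}) = ∫_{[−1,1]} 1/∏_{i=1}^{k+1}(1−λx_i) dμ(λ); in particular all k-th divided differences of f are nonnegative. -/

import Mathlib

noncomputable def divDiff (f : ℝ → ℝ) : (k : ℕ) → (Fin (k + 1) → ℝ) → ℝ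
  | 0, x => f (x 0)
  | k + 1, x =>
      (divDiff f k (fun i => x i.castSucc) - divDiff f k (fun i => x i.succ)) /
        (x 0 - x (Fin.last (k + 1)))

/-!
The `k`-th divided difference is a linear functional of the values at the nodes, so it commutes
with the integral over `λ` and annihilates the polynomial part, of degree `< k`. For the kernel
`K_j(λ, t) = (t - α)^j / ((1 - λ t)(1 - λ α)^j)` one has `K_{j+1} = (t - α)/(1 - λ α) · K_j`,
and the Leibniz rule for an affine factor gives, by induction on `j` starting from the geometric
`(1 - λ t)⁻¹`, that the `m`-th divided difference of `K_j` is `λ^(m-j) / ∏ (1 - λ x_i)` for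
`j ≤ m`. At `j = m = k` this is the positive integrand of the claim.
-/

open MeasureTheory Function

theorem divDiff_zero (f : ℝ → ℝ) (x : Fin 1 → ℝ) : divDiff f 0 x = f (x 0) := rfl

theorem divDiff_succ (f : ℝ → ℝ) (k : ℕ) (x : Fin (k + 2) → ℝ) :
    divDiff f (k + 1) x =
      (divDiff f k (Fin.init x) - divDiff f k (Fin.tail x)) / (x 0 - x (Fin.last (k + 1))) :=
  rfl

theorem exists_divDiff_eq_sum (k : ℕ) (x : Fin (k + 1) → ℝ) :
    ∃ w : Fin (k + 1) → ℝ, ∀ f : ℝ → ℝ, divDiff f k x = ∑ i, w i * f (x i) := by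
  induction k with
  | zero => exact ⟨fun _ => 1, fun f => by simp [divDiff_zero]⟩
  | succ k ih =>
    obtain ⟨wi, hwi⟩ := ih (Fin.init x)
    obtain ⟨wt, hwt⟩ := ih (Fin.tail x)
    refine ⟨fun i => ((Fin.snoc wi 0 : Fin (k + 2) → ℝ) i - (Fin.cons 0 wt : Fin (k + 2) → ℝ) i) /
      (x 0 - x (Fin.last (k + 1))), fun f => ?_⟩
    have h_init : ∑ i, (Fin.snoc wi 0 : Fin (k + 2) → ℝ) i * f (x i)
        = ∑ i, wi i * f (Fin.init x i) := by
      simp [Fin.sum_univ_castSucc, Fin.init]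
    have h_tail : ∑ i, (Fin.cons 0 wt : Fin (k + 2) → ℝ) i * f (x i)
        = ∑ i, wt i * f (Fin.tail x i) := by
      simp [Fin.sum_univ_succ, Fin.tail]
    rw [divDiff_succ, hwi, hwt, ← h_init, ← h_tail]
    simp only [div_mul_eq_mul_div, sub_mul, ← Finset.sum_div, Finset.sum_sub_distrib]

section Linearity

variable {k : ℕ} {x : Fin (k + 1) → ℝ}

theorem divDiff_congr {f g : ℝ → ℝ} (h : ∀ i, f (x i) = g (x i)) :
    divDiff f k x = divDiff g k x := by
  obtain ⟨w, hw⟩ := exists_divDiff_eq_sum k x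
  simp only [hw, h]

theorem divDiff_add (f g : ℝ → ℝ) :
    divDiff (fun t => f t + g t) k x = divDiff f k x + divDiff g k x := by
  obtain ⟨w, hw⟩ := exists_divDiff_eq_sum k x
  simp only [hw, mul_add, Finset.sum_add_distrib]

theorem divDiff_finsetSum {ι : Type*} (s : Finset ι) (g : ι → ℝ → ℝ) :
    divDiff (fun t => ∑ l ∈ s, g l t) k x = ∑ l ∈ s, divDiff (g l) k x := by
  obtain ⟨w, hw⟩ := exists_divDiff_eq_sum k x
  simp only [hw, Finset.mul_sum]
  exact Finset.sum_comm

theorem divDiff_const_mul (c : ℝ) (f : ℝ → ℝ) :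
    divDiff (fun t => c * f t) k x = c * divDiff f k x := by
  obtain ⟨w, hw⟩ := exists_divDiff_eq_sum k x
  simp only [hw, Finset.mul_sum]
  exact Finset.sum_congr rfl fun i _ => by ring

theorem divDiff_integral {Ω : Type*} [MeasurableSpace Ω] (ν : Measure Ω) (g : Ω → ℝ → ℝ)
    (hg : ∀ i, Integrable (fun ω => g ω (x i)) ν) :
    divDiff (fun t => ∫ ω, g ω t ∂ν) k x = ∫ ω, divDiff (g ω) k x ∂ν := by
  obtain ⟨w, hw⟩ := exists_divDiff_eq_sum k x
  simp only [hw, ← integral_const_mul]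
  exact (integral_finsetSum _ fun i _ => (hg i).const_mul (w i)).symm

end Linearity

theorem divDiff_const_succ (c : ℝ) (k : ℕ) (x : Fin (k + 2) → ℝ) :
    divDiff (fun _ => c) (k + 1) x = 0 := by
  induction k with
  | zero => simp [divDiff_succ, divDiff_zero]
  | succ k ih => rw [divDiff_succ, ih, ih, sub_self, zero_div]

theorem Function.Injective.fin_init {α : Type*} {n : ℕ} {x : Fin (n + 1) → α} (hx : Injective x) :
    Injective (Fin.init x) :=
  hx.comp (Fin.castSucc_injective _)

theorem Function.Injective.fin_tail {α : Type*} {n : ℕ} {x : Fin (n + 1) → α} (hx : Injective x) :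
    Injective (Fin.tail x) :=
  hx.comp (Fin.succ_injective _)

theorem divDiff_affine_mul (a b : ℝ) (g : ℝ → ℝ) (n : ℕ) (x : Fin (n + 2) → ℝ)
    (hx : Injective x) :
    divDiff (fun t => (a * t + b) * g t) (n + 1) x =
      (a * x 0 + b) * divDiff g (n + 1) x + a * divDiff g n (Fin.tail x) := by
  induction n with
  | zero =>
    have hne : x 0 - x 1 ≠ 0 := sub_ne_zero.2 (hx.ne (by decide))
    change ((a * x 0 + b) * g (x 0) - (a * x 1 + b) * g (x 1)) / (x 0 - x 1) =
      (a * x 0 + b) * ((g (x 0) - g (x 1)) / (x 0 - x 1)) + a * g (x 1)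
    field_simp
    ring
  | succ n ih =>
    have h0 : x 0 - x (Fin.last (n + 2)) ≠ 0 := sub_ne_zero.2 (hx.ne (by simp [Fin.ext_iff]))
    have h1 : Fin.tail x 0 - x (Fin.last (n + 2)) ≠ 0 :=
      sub_ne_zero.2 (hx.ne (by simp [Fin.ext_iff]))
    have h_tail : divDiff g (n + 1) (Fin.tail x) =
        (divDiff g n (Fin.tail (Fin.init x)) - divDiff g n (Fin.tail (Fin.tail x))) /
          (Fin.tail x 0 - x (Fin.last (n + 2))) :=
      divDiff_succ g n (Fin.tail x)
    have h_init : Fin.init x 0 = x 0 := rfl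
    rw [divDiff_succ, ih _ hx.fin_init, ih _ hx.fin_tail, divDiff_succ g (n + 1) x, h_tail, h_init]
    field_simp
    ring

theorem divDiff_pow_sub_eq_zero (α : ℝ) {l m : ℕ} (hlm : l < m) (x : Fin (m + 1) → ℝ)
    (hx : Injective x) : divDiff (fun t => (t - α) ^ l) m x = 0 := by
  induction l generalizing m with
  | zero =>
    obtain ⟨n, rfl⟩ : ∃ n, m = n + 1 := ⟨m - 1, by omega⟩
    simpa using divDiff_const_succ 1 n x
  | succ l ih =>
    obtain ⟨n, rfl⟩ : ∃ n, m = n + 1 := ⟨m - 1, by omega⟩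
    have h_factor : (fun t => (t - α) ^ (l + 1)) = fun t => (1 * t + -α) * (t - α) ^ l := by
      funext t
      ring
    rw [h_factor, divDiff_affine_mul _ _ _ _ _ hx, ih (by omega) _ hx, ih (by omega) _ hx.fin_tail]
    ring

theorem divDiff_inv_one_sub_mul (lam : ℝ) (m : ℕ) (x : Fin (m + 1) → ℝ) (hx : Injective x)
    (hpole : ∀ i, 1 - lam * x i ≠ 0) :
    divDiff (fun t => (1 - lam * t)⁻¹) m x = lam ^ m * (∏ i, (1 - lam * x i))⁻¹ := by
  induction m with
  | zero => simp [divDiff_zero]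
  | succ n ih =>
    have h_one : divDiff (fun t => (-lam * t + 1) * (1 - lam * t)⁻¹) (n + 1) x = 0 := by
      rw [divDiff_congr (g := fun _ => 1) fun i => by simp [neg_mul, ← sub_eq_neg_add, hpole i]]
      exact divDiff_const_succ 1 n x
    rw [divDiff_affine_mul _ _ _ _ _ hx, ih _ hx.fin_tail fun i => hpole _] at h_one
    have h0 := hpole 0
    rw [Fin.prod_univ_succ]
    simp only [Fin.tail] at h_one
    field_simp at h_one ⊢
    linear_combination h_one

theorem divDiff_kernel (α lam : ℝ) (hα : 1 - lam * α ≠ 0) {j m : ℕ} (hjm : j ≤ m)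
    (x : Fin (m + 1) → ℝ) (hx : Injective x) (hpole : ∀ i, 1 - lam * x i ≠ 0) :
    divDiff (fun t => (t - α) ^ j / ((1 - lam * t) * (1 - lam * α) ^ j)) m x =
      lam ^ (m - j) * (∏ i, (1 - lam * x i))⁻¹ := by
  induction j generalizing m with
  | zero => simpa using divDiff_inv_one_sub_mul lam m x hx hpole
  | succ j ih =>
    obtain ⟨n, rfl⟩ : ∃ n, m = n + 1 := ⟨m - 1, by omega⟩
    have h_factor : (fun t => (t - α) ^ (j + 1) / ((1 - lam * t) * (1 - lam * α) ^ (j + 1))) =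
        fun t => ((1 - lam * α)⁻¹ * t + -(α * (1 - lam * α)⁻¹)) *
          ((t - α) ^ j / ((1 - lam * t) * (1 - lam * α) ^ j)) := by
      funext t
      simp only [div_eq_mul_inv, mul_inv, pow_succ]
      ring
    rw [h_factor, divDiff_affine_mul _ _ _ _ _ hx, ih (by omega) _ hx hpole,
      ih (by omega) _ hx.fin_tail fun i => hpole _, Fin.prod_univ_succ,
      show n + 1 - j = n - j + 1 by omega, show n + 1 - (j + 1) = n - j by omega]
    have h0 := hpole 0
    simp only [Fin.tail]
    field_simp
    ring

theorem one_sub_mul_pos {lam t : ℝ} (hlam : lam ∈ Set.Icc (-1 : ℝ) 1)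
    (ht : t ∈ Set.Ioo (-1 : ℝ) 1) : 0 < 1 - lam * t := by
  have h : |lam * t| < 1 := by
    rw [abs_mul]
    exact mul_lt_one_of_nonneg_of_lt_one_right (abs_le.2 hlam) (abs_nonneg t) (abs_lt.2 ht)
  linarith [le_abs_self (lam * t)]

theorem integrableOn_kernel (μ : Measure ℝ) [IsFiniteMeasureOnCompacts μ] (k : ℕ) {α t : ℝ}
    (hα : α ∈ Set.Ioo (-1 : ℝ) 1) (ht : t ∈ Set.Ioo (-1 : ℝ) 1) :
    IntegrableOn (fun lam => (t - α) ^ k / ((1 - lam * t) * (1 - lam * α) ^ k))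
      (Set.Icc (-1 : ℝ) 1) μ := by
  refine ContinuousOn.integrableOn_compact isCompact_Icc <|
    continuousOn_const.div (by fun_prop) fun lam hlam => ?_
  exact mul_ne_zero (one_sub_mul_pos hlam ht).ne' (pow_ne_zero _ (one_sub_mul_pos hlam hα).ne')

open MeasureTheory in
theorem divDiff_of_integral_representation_general (k : ℕ) (f : ℝ → ℝ)
    (α : ℝ) (hα : α ∈ Set.Ioo (-1 : ℝ) 1) (c : ℕ → ℝ)
    (μ : Measure ℝ) [IsFiniteMeasure μ]
    (hrep : ∀ x ∈ Set.Ioo (-1 : ℝ) 1,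
      f x = (∑ l ∈ Finset.range k, c l * (x - α) ^ l) +
        ∫ lam in Set.Icc (-1 : ℝ) 1,
          (x - α) ^ k / ((1 - lam * x) * (1 - lam * α) ^ k) ∂μ) :
    ∀ x : Fin (k + 1) → ℝ, Function.Injective x →
      (∀ i, x i ∈ Set.Ioo (-1 : ℝ) 1) →
      divDiff f k x =
        (∫ lam in Set.Icc (-1 : ℝ) 1, (∏ i, (1 - lam * x i))⁻¹ ∂μ) ∧
      0 ≤ divDiff f k x := by
  intro x hx hmem
  have hpos : ∀ lam ∈ Set.Icc (-1 : ℝ) 1, ∀ i, 0 < 1 - lam * x i :=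
    fun lam hlam i => one_sub_mul_pos hlam (hmem i)
  have h_poly : divDiff (fun t => ∑ l ∈ Finset.range k, c l * (t - α) ^ l) k x = 0 := by
    rw [divDiff_finsetSum (g := fun l t => c l * (t - α) ^ l)]
    refine Finset.sum_eq_zero fun l hl => ?_
    rw [divDiff_const_mul (f := fun t => (t - α) ^ l),
      divDiff_pow_sub_eq_zero α (Finset.mem_range.1 hl) x hx, mul_zero]
  have key : divDiff f k x = ∫ lam in Set.Icc (-1 : ℝ) 1, (∏ i, (1 - lam * x i))⁻¹ ∂μ := by
    have h_split : divDiff f k x =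
        divDiff (fun t => ∑ l ∈ Finset.range k, c l * (t - α) ^ l) k x +
          divDiff (fun t => ∫ lam in Set.Icc (-1 : ℝ) 1,
            (t - α) ^ k / ((1 - lam * t) * (1 - lam * α) ^ k) ∂μ) k x := by
      rw [← divDiff_add]
      exact divDiff_congr fun i => hrep _ (hmem i)
    rw [h_split, h_poly, zero_add,
      divDiff_integral _ (fun lam t => (t - α) ^ k / ((1 - lam * t) * (1 - lam * α) ^ k))
        fun i => integrableOn_kernel μ k hα (hmem i)]
    refine setIntegral_congr_fun measurableSet_Icc fun lam hlam => ?_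
    rw [divDiff_kernel α lam (one_sub_mul_pos hlam hα).ne' le_rfl x hx
      fun i => (hpos lam hlam i).ne', Nat.sub_self, pow_zero, one_mul]
  refine ⟨key, key ▸ setIntegral_nonneg measurableSet_Icc fun lam hlam => ?_⟩
  exact inv_nonneg.2 (Finset.prod_nonneg fun i _ => (hpos lam hlam i).le)

open MeasureTheory in
theorem divDiff_of_integral_representation (k : ℕ) (f : ℝ → ℝ)
    (α : ℝ) (hα : α ∈ Set.Ioo (-1 : ℝ) 1) (c : ℕ → ℝ)
    (μ : Measure ℝ) [IsFiniteMeasure μ] (hsupp : μ (Set.Icc (-1 : ℝ) 1)ᶜ = 0)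
    (hrep : ∀ x ∈ Set.Ioo (-1 : ℝ) 1,
      f x = (∑ l ∈ Finset.range k, c l * (x - α) ^ l) +
        ∫ lam in Set.Icc (-1 : ℝ) 1,
          (x - α) ^ k / ((1 - lam * x) * (1 - lam * α) ^ k) ∂μ) :
    ∀ x : Fin (k + 1) → ℝ, Function.Injective x →
      (∀ i, x i ∈ Set.Ioo (-1 : ℝ) 1) →
      divDiff f k x =
        (∫ lam in Set.Icc (-1 : ℝ) 1, (∏ i, (1 - lam * x i))⁻¹ ∂μ) ∧
      0 ≤ divDiff f k x :=
  divDiff_of_integral_representation_general k f α hα c μ hrep
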